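/- arXiv:1808.08596 — 2 statements merged into one kernel-verified Lean document; each statement's English description precedes it below -/
import Mathlib

section
/- (ZF + 𝒞_{ω₁} is a normal filter on ω₁) If 𝒞_{ω₁} is an ultrafilter on ω₁, then there is no ω₁-sequence of distinct reals, i.e., no injection from ω₁ into ω^ω (equivalently, into the powerset of ω). -/
noncomputable section
open Set

/-- The first uncountable ordinal. -/
def omega1 : Ordinal := (Cardinal.aleph 1).ord

/-- `δ` is a limit point of `D`. -/
def IsLimitPoint (D : Set Ordinal) (δ : Ordinal) : Prop :=
  0 < δ ∧ ∀ β < δ, ∃ ξ ∈ D, β < ξ ∧ ξ < δ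

/-- `D` is a club subset of `ω₁`. -/
def IsClubSet (D : Set Ordinal) : Prop :=
  (∀ ξ ∈ D, ξ < omega1) ∧ (∀ β < omega1, ∃ ξ ∈ D, β < ξ) ∧
    (∀ δ < omega1, IsLimitPoint D δ → δ ∈ D)

/-- `X` measures `Y` (both of supremum `δ`). -/
def Measures (X Y : Set Ordinal) (δ : Ordinal) : Prop :=
  ∃ β < δ, ({ξ ∈ X | β ≤ ξ} ⊆ Y ∨ ∀ ξ ∈ X, β ≤ ξ → ξ ∉ Y)

/-- `c` is a closed cofinal subset of the limit ordinal `α`. -/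
def IsClosedCofinalIn (c : Set Ordinal) (α : Ordinal) : Prop :=
  (∀ ξ ∈ c, ξ < α) ∧ (∀ β < α, ∃ ξ ∈ c, β < ξ) ∧
    (∀ γ < α, IsLimitPoint c γ → γ ∈ c)

/-- A set of ordinals has order type `ω`. -/
def HasOrderTypeOmega (L : Set Ordinal) : Prop :=
  L.Infinite ∧ ∀ γ ∈ L, (L ∩ Set.Iio γ).Finite

/-- X belongs to the club filter on ω₁. -/
def InClubFilter (X : Set Ordinal) : Prop := ∃ C, IsClubSet C ∧ C ⊆ X

/-- S is a stationary subset of ω₁. -/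
def IsStationarySet (S : Set Ordinal) : Prop := ∀ C, IsClubSet C → (S ∩ C).Nonempty

/-- The diagonal intersection of an ω₁-sequence of sets. -/
def DiagInter (W : Ordinal → Set Ordinal) : Set Ordinal :=
  {δ | δ < omega1 ∧ ∀ α < δ, δ ∈ W α}

/-- The club filter is normal (closed under diagonal intersections). -/
def ClubFilterNormal : Prop :=
  ∀ W : Ordinal.{0} → Set Ordinal.{0}, (∀ α, α < omega1 → InClubFilter (W α)) →
    InClubFilter (DiagInter W)

/-- The club filter is an ultrafilter on ω₁. -/
def ClubFilterUltra : Prop :=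
  ∀ X : Set Ordinal.{0}, X ⊆ Set.Iio omega1 →
    InClubFilter X ∨ InClubFilter (Set.Iio omega1 \ X)

/-!
The club filter, being normal, is countably complete; being an ultrafilter, it decides for each
`n` whether `n ∈ x α` holds for almost all `α`. Intersecting these countably many decisions gives
a club on which `x` is constant, and a club has at least two points.
-/

lemma omega0_lt_omega1 : Ordinal.omega0 < omega1 := by
  rw [← Cardinal.ord_aleph0]
  exact Cardinal.ord_lt_ord.2 (by simp)

lemma lift_omega1 : Ordinal.lift.{u, 0} omega1.{0} = omega1.{u} := by
  rw [omega1, Cardinal.lift_ord, Cardinal.lift_aleph, Ordinal.lift_one]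
  rfl

lemma isClubSet_Iio_omega1 : IsClubSet (Iio omega1) := by
  have hlim : Order.IsSuccLimit omega1 := Cardinal.isSuccLimit_ord (Cardinal.aleph0_le_aleph 1)
  exact ⟨fun _ h => h, fun β hβ => ⟨Order.succ β, hlim.succ_lt hβ, Order.lt_succ β⟩,
    fun _ h _ => h⟩

lemma IsClubSet.inter_Ioi {C : Set Ordinal} (hC : IsClubSet C) {β : Ordinal} (hβ : β < omega1) :
    IsClubSet (C ∩ Ioi β) := by
  obtain ⟨hbdd, hunbdd, hclosed⟩ := hC
  refine ⟨fun ξ hξ => hbdd ξ hξ.1, fun γ hγ => ?_, fun δ hδ hlim => ⟨?_, ?_⟩⟩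
  · obtain ⟨ξ, hξC, hγξ⟩ := hunbdd γ hγ
    obtain ⟨η, hηC, hξη⟩ := hunbdd (max ξ β) (max_lt (hbdd ξ hξC) hβ)
    exact ⟨η, ⟨hηC, (le_max_right ξ β).trans_lt hξη⟩, hγξ.trans ((le_max_left ξ β).trans_lt hξη)⟩
  · exact hclosed δ hδ ⟨hlim.1, fun γ hγ =>
      let ⟨ξ, hξ, hγξ, hξδ⟩ := hlim.2 γ hγ; ⟨ξ, hξ.1, hγξ, hξδ⟩⟩
  · obtain ⟨ξ, hξ, -, hξδ⟩ := hlim.2 0 hlim.1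
    exact lt_trans hξ.2 hξδ

lemma IsClubSet.nontrivial {C : Set Ordinal} (hC : IsClubSet C) : C.Nontrivial := by
  obtain ⟨ξ, hξC, -⟩ := hC.2.1 0 (Ordinal.omega0_pos.trans omega0_lt_omega1)
  obtain ⟨η, hηC, hξη⟩ := hC.2.1 ξ (hC.1 ξ hξC)
  exact ⟨ξ, hξC, η, hηC, hξη.ne⟩

lemma InClubFilter.mono {X Y : Set Ordinal} (hXY : X ⊆ Y) : InClubFilter X → InClubFilter Y :=
  fun ⟨C, hC, hCX⟩ => ⟨C, hC, hCX.trans hXY⟩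

lemma inClubFilter_iInter_nat (hN : ClubFilterNormal) {W : ℕ → Set Ordinal.{0}}
    (hW : ∀ n, InClubFilter (W n)) : InClubFilter (⋂ n, W n) := by
  -- Index the sequence along `ω ⊆ ω₁`; above `ω` its diagonal intersection is the full one.
  set W' : Ordinal.{0} → Set Ordinal.{0} := fun α => ⋂ (n : ℕ) (_ : (n : Ordinal) = α), W n
  have hW' : ∀ α, α < omega1 → InClubFilter (W' α) := by
    intro α _
    by_cases hα : ∃ n : ℕ, (n : Ordinal) = α
    · obtain ⟨n, rfl⟩ := hα
      refine (hW n).mono fun δ hδ => mem_iInter₂.2 fun m hm => ?_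
      rwa [Nat.cast_inj.1 hm]
    · exact ⟨_, isClubSet_Iio_omega1, fun δ _ => mem_iInter₂.2 fun n hn => absurd ⟨n, hn⟩ hα⟩
  obtain ⟨C, hC, hCD⟩ := hN W' hW'
  refine ⟨C ∩ Ioi Ordinal.omega0, hC.inter_Ioi omega0_lt_omega1,
    fun δ hδ => mem_iInter.2 fun n => ?_⟩
  have hnδ : (n : Ordinal) < δ := (Ordinal.natCast_lt_omega0 n).trans hδ.2
  exact mem_iInter₂.1 ((hCD hδ.1).2 n hnδ) n rfl

lemma exists_inClubFilter_iff (hU : ClubFilterUltra) (P : Ordinal.{0} → Prop) :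
    ∃ b : Prop, InClubFilter {α | P α ↔ b} := by
  rcases hU {α | α < omega1 ∧ P α} (fun _ h => h.1) with ⟨C, hC, hCX⟩ | ⟨C, hC, hCX⟩
  · exact ⟨True, C, hC, fun α hα => iff_true_intro (hCX hα).2⟩
  · exact ⟨False, C, hC, fun α hα => iff_false_intro fun hP => (hCX hα).2 ⟨(hCX hα).1, hP⟩⟩

lemma exists_isClubSet_eqOn_const (hN : ClubFilterNormal) (hU : ClubFilterUltra)
    (x : Ordinal.{0} → Set ℕ) : ∃ C, IsClubSet C ∧ ∃ s, ∀ δ ∈ C, x δ = s := by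
  choose b hb using fun n => exists_inClubFilter_iff hU (fun α => n ∈ x α)
  obtain ⟨C, hC, hCb⟩ := inClubFilter_iInter_nat hN hb
  exact ⟨C, hC, {n | b n}, fun δ hδ => ext fun n => mem_iInter.1 (hCb hδ) n⟩

/-- (ZF + normality) If the club filter is an ultrafilter on ω₁, then there is
no ω₁-sequence of distinct reals. -/
theorem no_omega1_sequence_of_reals (hN : ClubFilterNormal) (hU : ClubFilterUltra) :
    ¬ ∃ x : Ordinal → Set ℕ, Set.InjOn x (Set.Iio omega1) := by
  rintro ⟨x, hx⟩
  obtain ⟨C, hC, s, hs⟩ := exists_isClubSet_eqOn_const hN hU (fun α => x (Ordinal.lift α))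
  obtain ⟨α, hα, β, hβ, hαβ⟩ := hC.nontrivial
  have hlift : ∀ γ ∈ C, Ordinal.lift γ ∈ Iio omega1 := fun γ hγ => by
    rw [mem_Iio, ← lift_omega1]
    exact Ordinal.lift_lt.2 (hC.1 γ hγ)
  exact hαβ (Ordinal.lift_inj.1 (hx (hlift α hα) (hlift β hβ) ((hs α hα).trans (hs β hβ).symm)))
end
end

section
/- In the setting of Proposition 3.1, if G is a filter on ℙ meeting E_C for every club C ⊆ ω₁ in M and meeting D_X = {(x,a) : X ∈ a} for every X ∈ 𝒴, then z = ⋃{x : ∃a (x,a) ∈ G} is an open M-stationary subset of δ such that z \ X is bounded in δ for every X ∈ 𝒴. -/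
noncomputable section
open Set

/-- `D` is a club subset of `ω₁`. -/
def IsClubOmega1 (D : Set Ordinal) : Prop :=
  (∀ ξ ∈ D, ξ < omega1) ∧ (∀ β < omega1, ∃ ξ ∈ D, β < ξ) ∧
    (∀ δ < omega1, IsLimitPoint D δ → δ ∈ D)

/-- z is M-stationary: it meets every club of ω₁ belonging to M
(here MSets is the collection of subsets of ω₁ that belong to M). -/
def MStat (MSets : Set (Set Ordinal)) (z : Set Ordinal) : Prop :=
  ∀ C ∈ MSets, IsClubOmega1 C → (z ∩ C).Nonempty

/-- A set of ordinals is open in the order topology. -/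
def IsOpenSub (x : Set Ordinal) : Prop :=
  ∀ ξ ∈ x, ξ = 0 ∨ ∃ β < ξ, Set.Ioc β ξ ⊆ x

/-- A condition of the poset ℙ of Proposition 3.1: a pair (x, a) where x ∈ M is
an open bounded subset of δ = M ∩ ω₁ and a is a finite subset of 𝒴. -/
structure Cond (MSets 𝒴 : Set (Set Ordinal)) (δ : Ordinal) where
  x : Set Ordinal
  a : Set (Set Ordinal)
  x_mem : x ∈ MSets
  x_open : IsOpenSub x
  x_sub : ∀ ξ ∈ x, ξ < δ
  x_bdd : ∃ β < δ, ∀ ξ ∈ x, ξ < β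
  a_fin : a.Finite
  a_sub : a ⊆ 𝒴

/-- The order on ℙ: (y, b) ≤ (x, a) iff y end-extends x, a ⊆ b, and y \ x ⊆ ⋂ a. -/
def Cond.le {MSets 𝒴 : Set (Set Ordinal)} {δ : Ordinal}
    (q p : Cond MSets 𝒴 δ) : Prop :=
  p.x ⊆ q.x ∧ (∀ ξ ∈ q.x, ξ ∉ p.x → ∀ η ∈ p.x, η < ξ) ∧
    p.a ⊆ q.a ∧ (q.x \ p.x ⊆ ⋂₀ p.a)

/-! If `(x, a) ∈ G` and `X ∈ a`, every extension of `(x, a)` adds only points of `X`. As `G` is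
directed, each point of `z` lies in a common extension of `(x, a)` and some condition of `G`, so
`z \ X ⊆ x`, which is bounded in `δ`. -/

theorem IsOpenSub.biUnion {ι : Type*} {s : Set ι} {f : ι → Set Ordinal}
    (hf : ∀ i ∈ s, IsOpenSub (f i)) : IsOpenSub (⋃ i ∈ s, f i) := by
  intro ξ hξ
  obtain ⟨i, hi, hξi⟩ := mem_iUnion₂.1 hξ
  exact (hf i hi ξ hξi).imp_right fun ⟨β, hβ, hsub⟩ =>
    ⟨β, hβ, hsub.trans (subset_biUnion_of_mem (u := f) hi)⟩

namespace Cond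

variable {MSets 𝒴 : Set (Set Ordinal)} {δ : Ordinal}

theorem le.diff_subset {q p : Cond MSets 𝒴 δ} (h : q.le p) {X : Set Ordinal} (hX : X ∈ p.a) :
    q.x \ p.x ⊆ X :=
  fun _ hξ => h.2.2.2 hξ X hX

theorem biUnion_diff_subset_x {G : Set (Cond MSets 𝒴 δ)} (hdir : DirectedOn (flip Cond.le) G)
    {p : Cond MSets 𝒴 δ} (hp : p ∈ G) {X : Set Ordinal} (hX : X ∈ p.a) :
    (⋃ q ∈ G, q.x) \ X ⊆ p.x := by
  rintro ξ ⟨hξ, hξX⟩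
  obtain ⟨q, hq, hξq⟩ := mem_iUnion₂.1 hξ
  obtain ⟨r, -, hrp, hrq⟩ := hdir p hp q hq
  by_contra hξp
  exact hξX (le.diff_subset hrp hX ⟨hrq.1 hξq, hξp⟩)

end Cond

theorem generic_filter_gives_z_general (MSets 𝒴 : Set (Set Ordinal)) (δ : Ordinal)
    (G : Set (Cond MSets 𝒴 δ))
    (hdir : ∀ p ∈ G, ∀ q ∈ G, ∃ r ∈ G, Cond.le r p ∧ Cond.le r q)
    (hEC : ∀ C ∈ MSets, IsClubOmega1 C → ∃ p ∈ G, (p.x ∩ C).Nonempty)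
    (hDX : ∀ X ∈ 𝒴, ∃ p ∈ G, X ∈ p.a) :
    IsOpenSub (⋃ p ∈ G, p.x) ∧ (∀ ξ ∈ ⋃ p ∈ G, p.x, ξ < δ) ∧
      MStat MSets (⋃ p ∈ G, p.x) ∧
      ∀ X ∈ 𝒴, ∃ β < δ, ∀ ξ ∈ ⋃ p ∈ G, p.x, ξ ∉ X → ξ < β := by
  refine ⟨IsOpenSub.biUnion fun p _ => p.x_open, ?_, ?_, ?_⟩
  · intro ξ hξ
    obtain ⟨p, -, hξp⟩ := mem_iUnion₂.1 hξ
    exact p.x_sub ξ hξp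
  · intro C hC hclub
    obtain ⟨p, hp, ξ, hξp, hξC⟩ := hEC C hC hclub
    exact ⟨ξ, mem_biUnion hp hξp, hξC⟩
  · intro X hX
    obtain ⟨p, hp, hXp⟩ := hDX X hX
    obtain ⟨β, hβ, hbound⟩ := p.x_bdd
    exact ⟨β, hβ, fun ξ hξ hξX =>
      hbound ξ (Cond.biUnion_diff_subset_x hdir hp hXp ⟨hξ, hξX⟩)⟩

/-- If G is a filter on ℙ meeting each E_C (C a club in M) and each D_X (X ∈ 𝒴),
then z = ⋃ {x : (x,a) ∈ G} is an open M-stationary subset of δ with z \ X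
bounded in δ for every X ∈ 𝒴. -/
theorem generic_filter_gives_z (MSets 𝒴 : Set (Set Ordinal)) (δ : Ordinal)
    (G : Set (Cond MSets 𝒴 δ))
    (hup : ∀ p ∈ G, ∀ q : Cond MSets 𝒴 δ, Cond.le p q → q ∈ G)
    (hdir : ∀ p ∈ G, ∀ q ∈ G, ∃ r ∈ G, Cond.le r p ∧ Cond.le r q)
    (hEC : ∀ C ∈ MSets, IsClubOmega1 C → ∃ p ∈ G, (p.x ∩ C).Nonempty)
    (hDX : ∀ X ∈ 𝒴, ∃ p ∈ G, X ∈ p.a) :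
    IsOpenSub (⋃ p ∈ G, p.x) ∧ (∀ ξ ∈ ⋃ p ∈ G, p.x, ξ < δ) ∧
      MStat MSets (⋃ p ∈ G, p.x) ∧
      ∀ X ∈ 𝒴, ∃ β < δ, ∀ ξ ∈ ⋃ p ∈ G, p.x, ξ ∉ X → ξ < β :=
  generic_filter_gives_z_general MSets 𝒴 δ G hdir hEC hDX
end
end
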